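/- Fix ε > 0 small, a unit vector e ∈ ℝ², real numbers p, q, and a C¹ function P̄ : B_{1/2} → ℝ with ∂_e P̄ = 0 (derivative along e vanishes identically). Define P(x) = p(x·e)⁺ − q(x·e)⁻ + P̄(x) and the maps T⁺(x) = x − εP₊(x)e on B⁺ = B_{1/2} ∩ {x·e > 0} with P₊ = p(x·e) + P̄, and T⁻(x) = x − εP₋(x)e on B⁻ = B_{1/2} ∩ {x·e < 0} with P₋ = −q(x·e) + P̄. If ε(|p| + |q|) < 1, then T⁺(B⁺) ∩ T⁻(B⁻) = ∅. -/

import Mathlib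

/-!
A point in the common image would be `x - s • e = y - t • e` with `⟪x, e⟫ > 0 > ⟪y, e⟫`.
Then `x - y` is a multiple of `e`, so `P̄(x) = P̄(y)` because `P̄` is constant along `e`, and the
`e`-components give `(1 - εp)⟪x, e⟫ = (1 + εq)⟪y, e⟫`. Both coefficients are positive when
`ε(|p| + |q|) < 1`, which contradicts the signs of `⟪x, e⟫` and `⟪y, e⟫`.
-/

open Metric

theorem apply_add_smul_eq_of_fderiv_apply_eq_zero {E F : Type*} [NormedAddCommGroup E]
    [NormedSpace ℝ E] [NormedAddCommGroup F] [NormedSpace ℝ F] {f : E → F}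
    (hf : Differentiable ℝ f) {v : E} (hv : ∀ x, fderiv ℝ f x v = 0) (x : E) (c : ℝ) :
    f (x + c • v) = f x := by
  have hline : ∀ t : ℝ, HasDerivAt (fun t : ℝ => f (x + t • v)) 0 t := by
    intro t
    have hpath : HasDerivAt (fun t : ℝ => x + t • v) v t := by
      simpa using ((hasDerivAt_id t).smul_const v).const_add x
    simpa only [hv, Function.comp_def] using (hf (x + t • v)).hasFDerivAt.comp_hasDerivAt t hpath
  simpa using is_const_of_deriv_eq_zero (fun t => (hline t).differentiableAt)
    (fun t => (hline t).deriv) c 0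

theorem eq_add_smul_of_sub_smul_eq {R M : Type*} [CommRing R] [AddCommGroup M] [Module R M]
    {x y e : M} {s t : R} (h : x - s • e = y - t • e) : x = y + (s - t) • e := by
  linear_combination (norm := module) h

theorem inner_sub_eq_of_sub_smul_eq {E : Type*} [NormedAddCommGroup E] [InnerProductSpace ℝ E]
    {x y e : E} {s t : ℝ} (he : ‖e‖ = 1) (h : x - s • e = y - t • e) :
    inner ℝ x e - s = inner ℝ y e - t := by
  simpa [inner_sub_left, real_inner_smul_left, real_inner_self_eq_norm_sq, he] using
    congrArg (fun v => inner ℝ v e) h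

theorem one_sub_mul_pos_of_mul_abs_add_lt_one {ε p q : ℝ} (hε : 0 < ε)
    (h : ε * (|p| + |q|) < 1) : 0 < 1 - ε * p := by
  nlinarith [le_abs_self p, abs_nonneg q]

/-- The images of the upper and lower half-balls under the transformations
`T⁺(x) = x - εP₊(x)e` and `T⁻(x) = x - εP₋(x)e` are disjoint when `ε(|p| + |q|) < 1`. -/
theorem images_disjoint
    (p q ε : ℝ) (hε : 0 < ε) (hsmall : ε * (|p| + |q|) < 1)
    (e : EuclideanSpace ℝ (Fin 2)) (he : ‖e‖ = 1)
    (Pb : EuclideanSpace ℝ (Fin 2) → ℝ) (hPb : ContDiff ℝ 1 Pb)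
    (hPe : ∀ x, fderiv ℝ Pb x e = 0) :
    ((fun x => x - (ε * (p * (inner ℝ x e : ℝ) + Pb x)) • e) ''
        (ball (0 : EuclideanSpace ℝ (Fin 2)) (1/2) ∩ {x | 0 < (inner ℝ x e : ℝ)})) ∩
    ((fun x => x - (ε * (-q * (inner ℝ x e : ℝ) + Pb x)) • e) ''
        (ball (0 : EuclideanSpace ℝ (Fin 2)) (1/2) ∩ {x | (inner ℝ x e : ℝ) < 0})) = ∅ := by
  refine Set.eq_empty_iff_forall_notMem.2 ?_
  rintro _ ⟨⟨x, ⟨-, hx⟩, rfl⟩, ⟨y, ⟨-, hy⟩, hxy⟩⟩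
  have hPxy : Pb x = Pb y := by
    rw [eq_add_smul_of_sub_smul_eq hxy.symm,
      apply_add_smul_eq_of_fderiv_apply_eq_zero (hPb.differentiable one_ne_zero) hPe]
  have hcomp := inner_sub_eq_of_sub_smul_eq he hxy.symm
  have hp : 0 < 1 - ε * p := one_sub_mul_pos_of_mul_abs_add_lt_one hε hsmall
  have hq : 0 < 1 - ε * -q :=
    one_sub_mul_pos_of_mul_abs_add_lt_one (q := p) hε (by rwa [abs_neg, add_comm])
  have hx' : 0 < inner ℝ x e * (1 - ε * p) := mul_pos hx hp
  have hy' : inner ℝ y e * (1 - ε * -q) < 0 := mul_neg_of_neg_of_pos hy hq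
  rw [hPxy] at hcomp
  linarith
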